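/- arXiv:math/0011243 — 7 statements merged into one kernel-verified Lean document; each statement's English description precedes it below -/
import Mathlib

section
/- Let Λ be a lattice (free abelian group of finite rank) with an integer-valued symmetric bilinear form (·|·), and let Δ ⊆ Λ be a set with Δ = -Δ, spanning Λ over ℤ, and closed under partial summation: if α, β ∈ Δ and (α|β) < 0 then α + β ∈ Δ. If the form is not semi-positive definite (i.e. there exists α ∈ Λ with (α|α) < 0), then there exists δ ∈ Δ with (δ|δ) < 0. -/
/-!
Suppose every element of `Δ` has nonnegative square. If a sum `s = a₁ + ⋯ + aₙ` of elements of `Δ`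
had `(s|s) < 0`, then `(aᵢ|s) < 0` for some `i`, hence `(aᵢ|s - aᵢ) < 0`, hence `(aᵢ|aⱼ) < 0` for
some `j ≠ i`. Replacing `aᵢ, aⱼ` by `aᵢ + aⱼ ∈ Δ` keeps `s` and shortens the sum, so by induction
on its length every such sum has nonnegative square. Since `Δ = -Δ` spans `Λ`, every element of
`Λ` is such a sum.
-/

theorem Multiset.exists_mem_apply_neg_of_apply_sum_neg {M R F : Type*} [AddCommMonoid M]
    [AddCommMonoid R] [LinearOrder R] [IsOrderedAddMonoid R] [FunLike F M R]
    [AddMonoidHomClass F M R] (f : F) {m : Multiset M} (h : f m.sum < 0) :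
    ∃ x ∈ m, f x < 0 := by
  contrapose! h
  rw [map_multiset_sum]
  exact Multiset.sum_nonneg fun y hy => by
    obtain ⟨x, hx, rfl⟩ := Multiset.mem_map.mp hy
    exact h x hx

theorem Submodule.mem_addSubmonoidClosure_of_mem_span_int {M : Type*} [AddCommGroup M]
    [Module ℤ M] {s : Set M} (hs : ∀ a ∈ s, -a ∈ s) {x : M} (hx : x ∈ span ℤ s) :
    x ∈ AddSubmonoid.closure s := by
  obtain rfl := Subsingleton.elim ‹Module ℤ M› (AddCommGroup.toIntModule M)
  have hx' : x ∈ (AddSubgroup.closure s).toAddSubmonoid := by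
    rwa [← span_int_eq_addSubgroupClosure]
  have hneg : -s ⊆ s := fun a ha => by simpa using hs _ ha
  rwa [AddSubgroup.closure_toAddSubmonoid, Set.union_eq_left.mpr hneg] at hx'

section PartialSummation

variable {R M : Type*} [CommRing R] [LinearOrder R] [IsOrderedRing R] [AddCommMonoid M]
  [Module R M] (B : M →ₗ[R] M →ₗ[R] R) {Δ : Set M}

theorem apply_multiset_sum_self_nonneg (hΔ : ∀ a ∈ Δ, 0 ≤ B a a)
    (hsum : ∀ a ∈ Δ, ∀ b ∈ Δ, B a b < 0 → a + b ∈ Δ) (m : Multiset M) (hm : ∀ x ∈ m, x ∈ Δ) :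
    0 ≤ B m.sum m.sum := by
  by_contra! hneg
  obtain ⟨a, ham, ha⟩ := Multiset.exists_mem_apply_neg_of_apply_sum_neg (B.flip m.sum) hneg
  obtain ⟨t, rfl⟩ := Multiset.exists_cons_of_mem ham
  rw [LinearMap.flip_apply, Multiset.sum_cons, map_add] at ha
  have hat : B a t.sum < 0 :=
    lt_of_not_ge fun h => (add_nonneg (hΔ a (hm a (Multiset.mem_cons_self a t))) h).not_gt ha
  obtain ⟨b, hbt, hab⟩ := Multiset.exists_mem_apply_neg_of_apply_sum_neg (B a) hat
  obtain ⟨u, rfl⟩ := Multiset.exists_cons_of_mem hbt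
  have hmerge : ∀ x ∈ (a + b) ::ₘ u, x ∈ Δ := by
    simp only [Multiset.mem_cons, forall_eq_or_imp] at hm ⊢
    exact ⟨hsum a hm.1 b hm.2.1 hab, hm.2.2⟩
  have := apply_multiset_sum_self_nonneg hΔ hsum ((a + b) ::ₘ u) hmerge
  simp only [Multiset.sum_cons, add_assoc] at this hneg
  exact hneg.not_ge this
termination_by m.card

end PartialSummation

theorem stmt_0_general (Λ : Type*) [AddCommGroup Λ] [Module ℤ Λ]
    (B : Λ →ₗ[ℤ] Λ →ₗ[ℤ] ℤ)
    (Δ : Set Λ) (hneg : ∀ a ∈ Δ, -a ∈ Δ)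
    (hspan : Submodule.span ℤ Δ = ⊤)
    (hsum : ∀ a ∈ Δ, ∀ b ∈ Δ, B a b < 0 → a + b ∈ Δ)
    (h : ∃ α : Λ, B α α < 0) :
    ∃ δ ∈ Δ, B δ δ < 0 := by
  by_contra! hΔ
  obtain ⟨α, hα⟩ := h
  obtain ⟨m, hm, rfl⟩ := AddSubmonoid.exists_multiset_of_mem_closure (x := α)
    (Submodule.mem_addSubmonoidClosure_of_mem_span_int hneg (hspan ▸ Submodule.mem_top))
  exact hα.not_ge (apply_multiset_sum_self_nonneg B hΔ hsum m hm)

/-- If a free ℤ-module of finite rank with an integer-valued symmetric bilinear form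
contains a set Δ with Δ = -Δ, spanning the lattice, closed under partial summation,
and the form is not semi-positive definite, then some element of Δ has negative square length. -/
theorem stmt_0 (Λ : Type*) [AddCommGroup Λ] [Module ℤ Λ]
    [Module.Free ℤ Λ] [Module.Finite ℤ Λ]
    (B : Λ →ₗ[ℤ] Λ →ₗ[ℤ] ℤ) (hsymm : ∀ x y, B x y = B y x)
    (Δ : Set Λ) (hneg : ∀ a ∈ Δ, -a ∈ Δ)
    (hspan : Submodule.span ℤ Δ = ⊤)
    (hsum : ∀ a ∈ Δ, ∀ b ∈ Δ, B a b < 0 → a + b ∈ Δ)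
    (h : ∃ α : Λ, B α α < 0) :
    ∃ δ ∈ Δ, B δ δ < 0 :=
  stmt_0_general Λ B Δ hneg hspan hsum h
end

section
/- Let Λ be a lattice with integer-valued symmetric bilinear form (·|·), and let Δ ⊆ Λ satisfy Δ = -Δ, span Λ over ℤ, and be closed under partial summation (α, β ∈ Δ, (α|β) < 0 implies α + β ∈ Δ). If the form is semi-positive definite but not positive definite, then there exists δ ∈ Δ with (δ|δ) = 0. -/
/-!
Write an isotropic vector λ ≠ 0 as a sum α₁ + ⋯ + αₙ of elements of Δ, which is possible since
Δ = -Δ generates Λ. If no αᵢ is isotropic then (α₁|α₁) > 0, and expanding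
0 = (λ|λ) = (α₁|α₁) + 2(α₁|α₂ + ⋯ + αₙ) + (α₂ + ⋯ + αₙ|α₂ + ⋯ + αₙ) with semi-positivity gives
(α₁|αᵢ) < 0 for some i ≥ 2. Partial summation puts α₁ + αᵢ in Δ, so λ is a sum of n - 1 elements
of Δ, and we conclude by induction on n.
-/

open Multiset

section
variable {Λ : Type*} [AddCommGroup Λ] [Module ℤ Λ]

lemma exists_multiset_sum_eq_of_span_eq_top {Δ : Set Λ} (hneg : ∀ a ∈ Δ, -a ∈ Δ)
    (hspan : Submodule.span ℤ Δ = ⊤) (x : Λ) :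
    ∃ m : Multiset Λ, (∀ a ∈ m, a ∈ Δ) ∧ m.sum = x := by
  -- `span_int_eq_addSubgroupClosure` is stated for the canonical `ℤ`-module structure
  obtain rfl : ‹Module ℤ Λ› = AddCommGroup.toIntModule Λ := Subsingleton.elim _ _
  have hx : x ∈ (AddSubgroup.closure Δ).toAddSubmonoid := by
    rw [← Submodule.span_int_eq_addSubgroupClosure, hspan]
    trivial
  have hΔ : Δ ∪ -Δ = Δ := Set.union_eq_left.mpr fun a ha => by simpa using hneg _ ha
  rw [AddSubgroup.closure_toAddSubmonoid, hΔ] at hx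
  exact AddSubmonoid.exists_multiset_of_mem_closure hx

variable (B : Λ →ₗ[ℤ] Λ →ₗ[ℤ] ℤ)

lemma exists_mem_apply_neg_of_isotropic_add_sum (hsymm : ∀ x y, B x y = B y x)
    (hspos : ∀ x, 0 ≤ B x x) {α : Λ} (hα : 0 < B α α) {t : Multiset Λ}
    (hiso : B (α + t.sum) (α + t.sum) = 0) : ∃ b ∈ t, B α b < 0 := by
  have hexpand : B α α + 2 * B α t.sum + B t.sum t.sum = 0 := by
    simp only [LinearMap.map_add, LinearMap.add_apply, hsymm t.sum α] at hiso
    linarith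
  have hneg : (t.map (B α)).sum < 0 := by
    rw [← map_multiset_sum]
    linarith [hspos t.sum]
  by_contra! h
  exact hneg.not_ge (sum_nonneg fun _ hx => by
    obtain ⟨b, hb, rfl⟩ := mem_map.mp hx
    exact h b hb)

theorem exists_isotropic_of_isotropic_sum (hsymm : ∀ x y, B x y = B y x) {Δ : Set Λ}
    (hsum : ∀ a ∈ Δ, ∀ b ∈ Δ, B a b < 0 → a + b ∈ Δ) (hspos : ∀ x, 0 ≤ B x x)
    (m : Multiset Λ) (hm : m ≠ 0) (hmΔ : ∀ a ∈ m, a ∈ Δ) (hiso : B m.sum m.sum = 0) :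
    ∃ δ ∈ Δ, B δ δ = 0 := by
  obtain ⟨α, hαm⟩ := exists_mem_of_ne_zero hm
  obtain ⟨t, rfl⟩ := exists_cons_of_mem hαm
  have hαΔ : α ∈ Δ := hmΔ α (mem_cons_self α t)
  obtain hα | hα := (hspos α).eq_or_lt
  · exact ⟨α, hαΔ, hα.symm⟩
  rw [sum_cons] at hiso
  obtain ⟨b, hbt, hαb⟩ := exists_mem_apply_neg_of_isotropic_add_sum B hsymm hspos hα hiso
  obtain ⟨t', rfl⟩ := exists_cons_of_mem hbt
  refine exists_isotropic_of_isotropic_sum hsymm hsum hspos ((α + b) ::ₘ t') cons_ne_zero ?_ ?_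
  · intro a ha
    obtain rfl | ha := mem_cons.mp ha
    · exact hsum α hαΔ b (hmΔ b (by simp)) hαb
    · exact hmΔ a (by simp [ha])
  · simpa [add_assoc] using hiso
termination_by card m

end

theorem stmt_1_general (Λ : Type*) [AddCommGroup Λ] [Module ℤ Λ]
    (B : Λ →ₗ[ℤ] Λ →ₗ[ℤ] ℤ) (hsymm : ∀ x y, B x y = B y x)
    (Δ : Set Λ) (hneg : ∀ a ∈ Δ, -a ∈ Δ)
    (hspan : Submodule.span ℤ Δ = ⊤)
    (hsum : ∀ a ∈ Δ, ∀ b ∈ Δ, B a b < 0 → a + b ∈ Δ)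
    (hspos : ∀ lam : Λ, 0 ≤ B lam lam)
    (hnpd : ∃ lam : Λ, lam ≠ 0 ∧ B lam lam = 0) :
    ∃ δ ∈ Δ, B δ δ = 0 := by
  obtain ⟨lam, hlam0, hlam⟩ := hnpd
  obtain ⟨m, hmΔ, rfl⟩ := exists_multiset_sum_eq_of_span_eq_top hneg hspan lam
  have hm : m ≠ 0 := by rintro rfl; exact hlam0 sum_zero
  exact exists_isotropic_of_isotropic_sum B hsymm hsum hspos m hm hmΔ hlam

/-- If the symmetric bilinear form on the lattice is semi-positive definite but not
positive definite, and Δ = -Δ spans Λ and is closed under partial summation, then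
Δ contains an isotropic vector. -/
theorem stmt_1 (Λ : Type*) [AddCommGroup Λ] [Module ℤ Λ]
    [Module.Free ℤ Λ] [Module.Finite ℤ Λ]
    (B : Λ →ₗ[ℤ] Λ →ₗ[ℤ] ℤ) (hsymm : ∀ x y, B x y = B y x)
    (Δ : Set Λ) (hneg : ∀ a ∈ Δ, -a ∈ Δ)
    (hspan : Submodule.span ℤ Δ = ⊤)
    (hsum : ∀ a ∈ Δ, ∀ b ∈ Δ, B a b < 0 → a + b ∈ Δ)
    (hspos : ∀ lam : Λ, 0 ≤ B lam lam)
    (hnpd : ∃ lam : Λ, lam ≠ 0 ∧ B lam lam = 0) :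
    ∃ δ ∈ Δ, B δ δ = 0 :=
  stmt_1_general Λ B hsymm Δ hneg hspan hsum hspos hnpd
end

section
/- The map sending t ↦ Σ_{i∈ℤ} E_{i,i-1}, t⁻¹ ↦ Σ_{i∈ℤ} E_{i,i+1}, and p ↦ -Σ_{i∈ℤ} (i+1) E_{i,i+1} defines an injective homomorphism of associative algebras from the localized Weyl algebra A = k⟨p, t, t⁻¹ | [t,p] = 1⟩ into the algebra of ℤ×ℤ matrices with finitely many nonzero diagonals. -/
inductive WeylRel (k : Type*) [Field k] :
    FreeAlgebra k (Fin 3) → FreeAlgebra k (Fin 3) → Prop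
  | comm : WeylRel k (FreeAlgebra.ι k 1 * FreeAlgebra.ι k 0)
      (FreeAlgebra.ι k 0 * FreeAlgebra.ι k 1 + 1)
  | inv_right : WeylRel k (FreeAlgebra.ι k 1 * FreeAlgebra.ι k 2) 1
  | inv_left : WeylRel k (FreeAlgebra.ι k 2 * FreeAlgebra.ι k 1) 1

/-- The localized Weyl algebra A = k⟨p, t, t⁻¹ | [t,p] = 1⟩. -/
abbrev WeylAlg (k : Type*) [Field k] := RingQuot (WeylRel k)

noncomputable def WeylP (k : Type*) [Field k] : WeylAlg k :=
  RingQuot.mkAlgHom k (WeylRel k) (FreeAlgebra.ι k 0)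

noncomputable def WeylT (k : Type*) [Field k] : WeylAlg k :=
  RingQuot.mkAlgHom k (WeylRel k) (FreeAlgebra.ι k 1)

noncomputable def WeylTinv (k : Type*) [Field k] : WeylAlg k :=
  RingQuot.mkAlgHom k (WeylRel k) (FreeAlgebra.ι k 2)

/-- The operator Σ_{i∈ℤ} E_{i,i-1}, i.e. e_j ↦ e_{j+1}, on column vectors with
finite support. -/
noncomputable def tOp (k : Type*) [Field k] : Module.End k (ℤ →₀ k) :=
  Finsupp.lsum k fun j : ℤ => Finsupp.lsingle (j + 1)

/-- The operator Σ_{i∈ℤ} E_{i,i+1}, i.e. e_j ↦ e_{j-1}. -/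
noncomputable def tinvOp (k : Type*) [Field k] : Module.End k (ℤ →₀ k) :=
  Finsupp.lsum k fun j : ℤ => Finsupp.lsingle (j - 1)

/-- The operator -Σ_{i∈ℤ} (i+1) E_{i,i+1}, i.e. e_j ↦ -j e_{j-1}. -/
noncomputable def pOp (k : Type*) [Field k] : Module.End k (ℤ →₀ k) :=
  Finsupp.lsum k fun j : ℤ => ((-j : ℤ) : k) • Finsupp.lsingle (j - 1)

/-- An operator is a band matrix (finitely many nonzero diagonals) if its matrix
entries vanish far from the main diagonal. -/
def IsBandOp (k : Type*) [Field k] (f : Module.End k (ℤ →₀ k)) : Prop :=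
  ∃ N : ℕ, ∀ i j : ℤ, (N : ℤ) < |i - j| → f (Finsupp.single j 1) i = 0
namespace Stmt6
variable (k : Type*) [Field k]

@[simp] lemma tOp_single (j : ℤ) (c : k) : tOp k (Finsupp.single j c) = Finsupp.single (j+1) c := by
  simp only [tOp, Finsupp.lsum_single, Finsupp.lsingle_apply]

@[simp] lemma tinvOp_single (j : ℤ) (c : k) : tinvOp k (Finsupp.single j c) = Finsupp.single (j-1) c := by
  simp only [tinvOp, Finsupp.lsum_single, Finsupp.lsingle_apply]

@[simp] lemma pOp_single (j : ℤ) (c : k) :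
    pOp k (Finsupp.single j c) = ((-j : ℤ):k) • Finsupp.single (j-1) c := by
  simp only [pOp, Finsupp.lsum_single, LinearMap.smul_apply, Finsupp.lsingle_apply]

lemma end_rel1 : tOp k * pOp k = pOp k * tOp k + 1 := by
  ext j : 1
  apply LinearMap.ext; intro c
  simp only [LinearMap.add_apply, Module.End.mul_apply, Module.End.one_apply,
    LinearMap.comp_apply, Finsupp.lsingle_apply, tOp_single, pOp_single, map_smul,
    Finsupp.smul_single, smul_eq_mul]
  rw [sub_add_cancel]
  ext i
  simp only [Finsupp.add_apply, Finsupp.single_apply]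
  split <;> simp_all <;> ring

lemma end_rel2 : tOp k * tinvOp k = 1 := by
  ext j : 1
  apply LinearMap.ext; intro c
  simp only [Module.End.mul_apply, Module.End.one_apply, LinearMap.comp_apply,
    Finsupp.lsingle_apply, tOp_single, tinvOp_single, sub_add_cancel]

lemma end_rel3 : tinvOp k * tOp k = 1 := by
  ext j : 1
  apply LinearMap.ext; intro c
  simp only [Module.End.mul_apply, Module.End.one_apply, LinearMap.comp_apply,
    Finsupp.lsingle_apply, tOp_single, tinvOp_single, add_sub_cancel_right]

end Stmt6
namespace Stmt6
variable (k : Type*) [Field k]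

noncomputable def F0 : FreeAlgebra k (Fin 3) →ₐ[k] Module.End k (ℤ →₀ k) :=
  FreeAlgebra.lift k ![pOp k, tOp k, tinvOp k]

lemma F0_rel : ∀ ⦃x y⦄, WeylRel k x y → F0 k x = F0 k y := by
  intro x y h
  induction h with
  | comm => simp [F0]; exact end_rel1 k
  | inv_right => simp [F0]; exact end_rel2 k
  | inv_left => simp [F0]; exact end_rel3 k

noncomputable def Fhom : WeylAlg k →ₐ[k] Module.End k (ℤ →₀ k) :=
  RingQuot.liftAlgHom k ⟨F0 k, F0_rel k⟩

@[simp] lemma Fhom_P : Fhom k (WeylP k) = pOp k := by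
  simp [Fhom, WeylP, RingQuot.liftAlgHom_mkAlgHom_apply, F0]

@[simp] lemma Fhom_T : Fhom k (WeylT k) = tOp k := by
  simp [Fhom, WeylT, RingQuot.liftAlgHom_mkAlgHom_apply, F0]

@[simp] lemma Fhom_Tinv : Fhom k (WeylTinv k) = tinvOp k := by
  simp [Fhom, WeylTinv, RingQuot.liftAlgHom_mkAlgHom_apply, F0]

end Stmt6
namespace Stmt6
variable (k : Type*) [Field k]

local notation "P" => WeylP k
local notation "T" => WeylT k
local notation "Ti" => WeylTinv k

lemma rel_TP : T * P = P * T + 1 := by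
  have := RingQuot.mkAlgHom_rel k (WeylRel.comm (k := k))
  simpa [WeylP, WeylT, map_mul, map_add, map_one] using this

lemma rel_TTi : T * Ti = 1 := by
  have := RingQuot.mkAlgHom_rel k (WeylRel.inv_right (k := k))
  simpa [WeylT, WeylTinv, map_mul, map_one] using this

lemma rel_TiT : Ti * T = 1 := by
  have := RingQuot.mkAlgHom_rel k (WeylRel.inv_left (k := k))
  simpa [WeylT, WeylTinv, map_mul, map_one] using this

lemma rel_PTi : P * Ti = Ti * P + Ti * Ti := by
  have h : Ti * (T * P) * Ti = Ti * (P * T + 1) * Ti := by rw [rel_TP]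
  calc P * Ti = Ti * (T * P) * Ti := by
        rw [← mul_assoc, rel_TiT, one_mul]
    _ = Ti * (P * T + 1) * Ti := h
    _ = Ti * P * (T * Ti) + Ti * Ti := by noncomm_ring
    _ = Ti * P + Ti * Ti := by rw [rel_TTi, mul_one]

/-- T^n for n ∈ ℤ. -/
noncomputable def Tz (n : ℤ) : WeylAlg k := T ^ n.toNat * Ti ^ (-n).toNat

/-- the monomials T^n P^m. -/
noncomputable def M (n : ℤ) (m : ℕ) : WeylAlg k := Tz k n * P ^ m

lemma Tz_mul_T (n : ℤ) : Tz k n * T = Tz k (n + 1) := by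
  rcases le_or_gt 0 n with h | h
  · have h1 : (-n).toNat = 0 := by omega
    have h2 : (-(n+1)).toNat = 0 := by omega
    have h3 : (n+1).toNat = n.toNat + 1 := by omega
    simp only [Tz, h1, h2, h3, pow_succ, pow_zero, mul_one]
  · have h1 : (-n).toNat = (-(n+1)).toNat + 1 := by omega
    have h2 : n.toNat = 0 := by omega
    have h3 : (n+1).toNat = 0 := by omega
    simp only [Tz, h1, h2, h3, pow_zero, one_mul, pow_succ, mul_assoc, rel_TiT, mul_one]

lemma Tz_mul_Ti (n : ℤ) : Tz k n * Ti = Tz k (n - 1) := by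
  rcases le_or_gt n 0 with h | h
  · have h1 : n.toNat = 0 := by omega
    have h2 : (n-1).toNat = 0 := by omega
    have h3 : (-(n-1)).toNat = (-n).toNat + 1 := by omega
    simp only [Tz, h1, h2, h3, pow_succ, pow_zero, one_mul, mul_assoc]
  · have h1 : n.toNat = (n-1).toNat + 1 := by omega
    have h2 : (-n).toNat = 0 := by omega
    have h3 : (-(n-1)).toNat = 0 := by omega
    simp only [Tz, h1, h2, h3, pow_zero, mul_one, pow_succ, mul_assoc, rel_TTi]

lemma powP_mul_T (m : ℕ) : P ^ (m + 1) * T = T * P ^ (m + 1) - ((m + 1 : ℕ) : k) • P ^ m := by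
  induction m with
  | zero =>
    simp only [zero_add, pow_one, pow_zero, Nat.cast_one, one_smul]
    rw [rel_TP, add_sub_cancel_right]
  | succ m ih =>
    have : P ^ (m + 2) * T = P * (P ^ (m + 1) * T) := by
      rw [← mul_assoc, ← pow_succ']
    rw [this, ih, mul_sub, ← mul_assoc, mul_smul_comm]
    have hPT : P * T = T * P - 1 := by rw [rel_TP, add_sub_cancel_right]
    rw [hPT]
    push_cast
    rw [sub_mul, one_mul, mul_assoc, ← pow_succ']
    rw [← pow_succ']
    module

end Stmt6
namespace Stmt6
variable (k : Type*) [Field k]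

local notation "P" => WeylP k
local notation "T" => WeylT k
local notation "Ti" => WeylTinv k

/-- monomials of P-degree at most m -/
noncomputable def W (m : ℕ) : Submodule k (WeylAlg k) :=
  Submodule.span k {x | ∃ n : ℤ, ∃ j : ℕ, j ≤ m ∧ x = M k n j}

lemma M_mem_W {n : ℤ} {j m : ℕ} (h : j ≤ m) : M k n j ∈ W k m :=
  Submodule.subset_span ⟨n, j, h, rfl⟩

lemma W_mono {m m' : ℕ} (h : m ≤ m') : W k m ≤ W k m' :=
  Submodule.span_mono (fun x ⟨n, j, hj, hx⟩ => ⟨n, j, hj.trans h, hx⟩)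

lemma M_mul_P (n : ℤ) (m : ℕ) : M k n m * P = M k n (m + 1) := by
  rw [M, M, mul_assoc, ← pow_succ]

lemma M_mul_T_zero (n : ℤ) : M k n 0 * T = M k (n + 1) 0 := by
  rw [M, M, pow_zero, mul_one, mul_one, Tz_mul_T]

lemma M_mul_Ti_zero (n : ℤ) : M k n 0 * Ti = M k (n - 1) 0 := by
  rw [M, M, pow_zero, mul_one, mul_one, Tz_mul_Ti]

lemma M_mul_T_succ (n : ℤ) (m : ℕ) :
    M k n (m + 1) * T = M k (n + 1) (m + 1) - ((m + 1 : ℕ) : k) • M k n m := by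
  rw [M, mul_assoc, powP_mul_T, mul_sub, mul_smul_comm, ← mul_assoc, Tz_mul_T, M, M]

lemma W_mul_P {m : ℕ} {x : WeylAlg k} (hx : x ∈ W k m) : x * P ∈ W k (m + 1) := by
  induction hx using Submodule.span_induction with
  | mem x hx =>
    obtain ⟨n, j, hj, rfl⟩ := hx
    rw [M_mul_P]
    exact M_mem_W k (by omega)
  | zero => simpa using (W k (m+1)).zero_mem
  | add x y _ _ hx hy => rw [add_mul]; exact (W k (m+1)).add_mem hx hy
  | smul c x _ hx => rw [smul_mul_assoc]; exact (W k (m+1)).smul_mem c hx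

lemma W_mul_T {m : ℕ} {x : WeylAlg k} (hx : x ∈ W k m) : x * T ∈ W k m := by
  induction hx using Submodule.span_induction with
  | mem x hx =>
    obtain ⟨n, j, hj, rfl⟩ := hx
    cases j with
    | zero => rw [M_mul_T_zero]; exact M_mem_W k (by omega)
    | succ j' =>
      rw [M_mul_T_succ]
      exact (W k m).sub_mem (M_mem_W k hj) ((W k m).smul_mem _ (M_mem_W k (by omega)))
  | zero => simpa using (W k m).zero_mem
  | add x y _ _ hx hy => rw [add_mul]; exact (W k m).add_mem hx hy
  | smul c x _ hx => rw [smul_mul_assoc]; exact (W k m).smul_mem c hx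

lemma W_mul_Ti : ∀ m : ℕ, ∀ x ∈ W k m, x * Ti ∈ W k m := by
  intro m
  induction m with
  | zero =>
    intro x hx
    induction hx using Submodule.span_induction with
    | mem x hx =>
      obtain ⟨n, j, hj, rfl⟩ := hx
      interval_cases j
      rw [M_mul_Ti_zero]; exact M_mem_W k le_rfl
    | zero => simpa using (W k 0).zero_mem
    | add x y _ _ hx hy => rw [add_mul]; exact (W k 0).add_mem hx hy
    | smul c x _ hx => rw [smul_mul_assoc]; exact (W k 0).smul_mem c hx
  | succ m ih =>
    intro x hx
    induction hx using Submodule.span_induction with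
    | mem x hx =>
      obtain ⟨n, j, hj, rfl⟩ := hx
      rcases Nat.lt_or_ge j (m + 1) with hj' | hj'
      · exact W_mono k (le_refl (m+1) : m + 1 ≤ m + 1) <| W_mono k (by omega : m ≤ m + 1) <|
          ih _ (M_mem_W k (by omega))
      · have hjeq : j = m + 1 := by omega
        subst hjeq
        have key : M k n (m + 1) * Ti = (M k n m * Ti) * P + (M k n m * Ti) * Ti := by
          rw [M, pow_succ, ← mul_assoc, mul_assoc (Tz k n * P ^ m), rel_PTi, mul_add,
            ← mul_assoc, ← mul_assoc, ← M]
        rw [key]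
        have h1 : M k n m * Ti ∈ W k m := ih _ (M_mem_W k le_rfl)
        exact (W k (m+1)).add_mem (W_mul_P k h1) (W_mono k (by omega) (ih _ h1))
    | zero => simpa using (W k (m+1)).zero_mem
    | add x y _ _ hx hy => rw [add_mul]; exact (W k (m+1)).add_mem hx hy
    | smul c x _ hx => rw [smul_mul_assoc]; exact (W k (m+1)).smul_mem c hx

end Stmt6
namespace Stmt6
variable (k : Type*) [Field k]

lemma one_eq_M : (1 : WeylAlg k) = M k 0 0 := by
  simp [M, Tz]

lemma exists_W (a : WeylAlg k) : ∃ m : ℕ, a ∈ W k m := by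
  obtain ⟨b, rfl⟩ := RingQuot.mkAlgHom_surjective k (WeylRel k) a
  have key : ∀ b : FreeAlgebra k (Fin 3), ∀ m : ℕ, ∀ x ∈ W k m,
      ∃ m', x * RingQuot.mkAlgHom k (WeylRel k) b ∈ W k m' := by
    intro b
    induction b using FreeAlgebra.induction with
    | grade0 r =>
      intro m x hx
      refine ⟨m, ?_⟩
      rw [AlgHom.commutes, ← Algebra.commutes, ← Algebra.smul_def]
      exact (W k m).smul_mem r hx
    | grade1 i =>
      intro m x hx
      fin_cases i
      · exact ⟨m + 1, W_mul_P k hx⟩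
      · exact ⟨m, W_mul_T k hx⟩
      · exact ⟨m, W_mul_Ti k m x hx⟩
    | mul b c hb hc =>
      intro m x hx
      obtain ⟨m₁, h₁⟩ := hb m x hx
      obtain ⟨m₂, h₂⟩ := hc m₁ _ h₁
      exact ⟨m₂, by rwa [map_mul, ← mul_assoc]⟩
    | add b c hb hc =>
      intro m x hx
      obtain ⟨m₁, h₁⟩ := hb m x hx
      obtain ⟨m₂, h₂⟩ := hc m x hx
      refine ⟨max m₁ m₂, ?_⟩
      rw [map_add, mul_add]
      exact (W k _).add_mem (W_mono k (le_max_left _ _) h₁) (W_mono k (le_max_right _ _) h₂)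
  obtain ⟨m', h⟩ := key b 0 1 (one_eq_M k ▸ M_mem_W k le_rfl)
  exact ⟨m', by rwa [one_mul] at h⟩

lemma mem_span_M (a : WeylAlg k) :
    a ∈ Submodule.span k (Set.range fun p : ℤ × ℕ => M k p.1 p.2) := by
  obtain ⟨m, hm⟩ := exists_W k a
  refine Submodule.span_le.mpr ?_ hm
  rintro x ⟨n, j, hj, rfl⟩
  exact Submodule.subset_span ⟨(n, j), rfl⟩

end Stmt6
namespace Stmt6
variable (k : Type*) [Field k]

/-- phi j m = (-1)^m j (j-1) ... (j-m+1) -/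
noncomputable def phi (j : ℤ) : ℕ → k
  | 0 => 1
  | m + 1 => phi j m * ((-(j - m) : ℤ) : k)

lemma phi_eq_zero : ∀ (m m' : ℕ), m' < m → phi k (m' : ℤ) m = 0 := by
  intro m
  induction m with
  | zero => omega
  | succ m ih =>
    intro m' hm'
    rcases Nat.lt_or_ge m' m with h | h
    · rw [phi, ih m' h, zero_mul]
    · have : m' = m := by omega
      subst this
      rw [phi]
      have : (-(↑m' - ↑m') : ℤ) = 0 := by ring
      rw [this, Int.cast_zero, mul_zero]

variable [CharZero k]

lemma phi_ne_zero' : ∀ (m : ℕ) (j : ℤ), (∀ i : ℕ, i < m → j ≠ (i : ℤ)) → phi k j m ≠ 0 := by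
  intro m
  induction m with
  | zero => intro j _; rw [phi]; exact one_ne_zero
  | succ m ih =>
    intro j hj
    rw [phi]
    refine mul_ne_zero (ih j fun i hi => hj i (by omega)) ?_
    rw [Int.cast_ne_zero]
    have := hj m (by omega)
    omega

lemma phi_self_ne_zero (m : ℕ) : phi k (m : ℤ) m ≠ 0 :=
  phi_ne_zero' k m m (fun i hi => by omega)

lemma tOp_pow_single (a : ℕ) (j : ℤ) :
    (tOp k ^ a) (Finsupp.single j 1) = Finsupp.single (j + a) 1 := by
  induction a with
  | zero => simp
  | succ a ih =>
    rw [pow_succ', Module.End.mul_apply, ih]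
    push_cast
    rw [tOp_single]
    ring_nf

lemma tinvOp_pow_single (a : ℕ) (j : ℤ) :
    (tinvOp k ^ a) (Finsupp.single j 1) = Finsupp.single (j - a) 1 := by
  induction a with
  | zero => simp
  | succ a ih =>
    rw [pow_succ', Module.End.mul_apply, ih]
    push_cast
    rw [tinvOp_single]
    ring_nf

lemma pOp_pow_single (m : ℕ) (j : ℤ) :
    (pOp k ^ m) (Finsupp.single j 1) = phi k j m • Finsupp.single (j - m) 1 := by
  induction m with
  | zero => simp [phi]
  | succ m ih =>
    rw [pow_succ', Module.End.mul_apply, ih, map_smul, pOp_single, phi]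
    rw [smul_smul]
    have hidx : j - (m:ℤ) - 1 = j - ((m+1 : ℕ) : ℤ) := by push_cast; ring
    rw [hidx]

lemma Fhom_M_single (n : ℤ) (m : ℕ) (j : ℤ) :
    Fhom k (M k n m) (Finsupp.single j 1) = phi k j m • Finsupp.single (j - m + n) 1 := by
  rw [M, Tz, map_mul, map_mul, map_pow, map_pow, map_pow, Fhom_T, Fhom_Tinv, Fhom_P,
    Module.End.mul_apply, Module.End.mul_apply, pOp_pow_single, map_smul, map_smul,
    tinvOp_pow_single, tOp_pow_single]
  congr 2
  omega

end Stmt6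
namespace Stmt6
variable (k : Type*) [Field k] [CharZero k]

lemma Fhom_sum_eq (c : (ℤ × ℕ) →₀ k)
    (hc : (c.sum fun p r => r • M k p.1 p.2) = a) :
    Fhom k a = c.sum fun p r => r • Fhom k (M k p.1 p.2) := by
  rw [← hc, map_finsuppSum]
  exact Finsupp.sum_congr fun p _ => map_smul (Fhom k) _ _

lemma scalar_eq (c : (ℤ × ℕ) →₀ k)
    (h1 : (c.sum fun p r => r • Fhom k (M k p.1 p.2)) = 0) (j i : ℤ) :
    ∑ p ∈ c.support, c p * phi k j p.2 * (Finsupp.single (j - p.2 + p.1) (1:k)) i = 0 := by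
  have h2 : ((c.sum fun p r => r • Fhom k (M k p.1 p.2)) (Finsupp.single j 1)) i = 0 := by
    rw [h1]; simp
  rw [Finsupp.sum, LinearMap.sum_apply, Finsupp.finset_sum_apply] at h2
  rw [← h2]
  refine Finset.sum_congr rfl fun p _ => ?_
  rw [LinearMap.smul_apply, Fhom_M_single, Finsupp.smul_apply, Finsupp.smul_apply,
    smul_eq_mul, smul_eq_mul, mul_assoc]

lemma c_eq_zero (c : (ℤ × ℕ) →₀ k)
    (h1 : (c.sum fun p r => r • Fhom k (M k p.1 p.2)) = 0) : c = 0 := by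
  have key : ∀ m : ℕ, ∀ d : ℤ, c (d + m, m) = 0 := by
    intro m
    induction m using Nat.strong_induction_on with
    | _ m ih =>
      intro d
      have h := scalar_eq k c h1 (m : ℤ) ((m : ℤ) + d)
      rw [Finset.sum_eq_single ((d + (m : ℤ), m) : ℤ × ℕ)] at h
      · have hidx : ((m : ℤ) - (m : ℕ) + (d + (m : ℤ))) = (m : ℤ) + d := by push_cast; ring
        rw [hidx, Finsupp.single_apply, if_pos rfl, mul_one] at h
        exact (mul_eq_zero.1 h).resolve_right (phi_self_ne_zero k m)
      · rintro ⟨n, m'⟩ _ hb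
        by_cases hcond : (m : ℤ) - (m' : ℕ) + n = (m : ℤ) + d
        · have hn : n = d + m' := by omega
          subst hn
          have hm' : m' ≠ m := by
            intro hmm; subst hmm; exact hb rfl
          rcases Nat.lt_or_ge m' m with hlt | hge
          · rw [ih m' hlt d, zero_mul, zero_mul]
          · have : m < m' := by omega
            rw [phi_eq_zero k m' m this, mul_zero, zero_mul]
        · rw [Finsupp.single_apply, if_neg hcond, mul_zero]
      · intro hns
        rw [Finsupp.notMem_support_iff.1 hns, zero_mul, zero_mul]
  ext p
  obtain ⟨n, m⟩ := p
  have := key m (n - m)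
  simpa using (by rwa [sub_add_cancel] at this : c (n, m) = 0)

lemma Fhom_injective : Function.Injective (Fhom k) := by
  rw [injective_iff_map_eq_zero]
  intro a ha
  obtain ⟨c, hc⟩ := Finsupp.mem_span_range_iff_exists_finsupp.1 (mem_span_M k a)
  have h1 := Fhom_sum_eq k c hc
  rw [ha] at h1
  have hcz := c_eq_zero k c h1.symm
  rw [← hc, hcz]
  simp

lemma band_add {f g : Module.End k (ℤ →₀ k)} (hf : IsBandOp k f) (hg : IsBandOp k g) :
    IsBandOp k (f + g) := by
  obtain ⟨N₁, h₁⟩ := hf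
  obtain ⟨N₂, h₂⟩ := hg
  refine ⟨max N₁ N₂, fun i j h => ?_⟩
  rw [LinearMap.add_apply, Finsupp.add_apply,
    h₁ i j (lt_of_le_of_lt (by exact_mod_cast le_max_left N₁ N₂) h),
    h₂ i j (lt_of_le_of_lt (by exact_mod_cast le_max_right N₁ N₂) h),
    add_zero]

lemma band_zero : IsBandOp k (0 : Module.End k (ℤ →₀ k)) := ⟨0, by simp⟩

lemma band_term (r : k) (n : ℤ) (m : ℕ) : IsBandOp k (r • Fhom k (M k n m)) := by
  refine ⟨n.natAbs + m, fun i j h => ?_⟩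
  have h2 : ((n.natAbs + m : ℕ) : ℤ) < ((i - j).natAbs : ℤ) := by
    rwa [Int.abs_eq_natAbs] at h
  rw [LinearMap.smul_apply, Fhom_M_single, Finsupp.smul_apply, Finsupp.smul_apply,
    Finsupp.single_apply, if_neg (by omega), smul_zero, smul_zero]

lemma Fhom_band (a : WeylAlg k) : IsBandOp k (Fhom k a) := by
  obtain ⟨c, hc⟩ := Finsupp.mem_span_range_iff_exists_finsupp.1 (mem_span_M k a)
  rw [Fhom_sum_eq k c hc, Finsupp.sum]
  exact Finset.sum_induction _ _ (fun f g hf hg => band_add k hf hg) (band_zero k)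
    (fun p _ => band_term k (c p) p.1 p.2)

end Stmt6
/-- The assignments t ↦ Σ E_{i,i-1}, t⁻¹ ↦ Σ E_{i,i+1}, p ↦ -Σ (i+1) E_{i,i+1} define
an injective algebra homomorphism from the localized Weyl algebra into the algebra of
ℤ×ℤ matrices with finitely many nonzero diagonals. -/
theorem stmt_6 (k : Type*) [Field k] [CharZero k] :
    ∃ f : WeylAlg k →ₐ[k] Module.End k (ℤ →₀ k),
      Function.Injective f ∧
      (∀ a : WeylAlg k, IsBandOp k (f a)) ∧
      f (WeylT k) = tOp k ∧ f (WeylTinv k) = tinvOp k ∧ f (WeylP k) = pOp k :=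
  ⟨Stmt6.Fhom k, Stmt6.Fhom_injective k, Stmt6.Fhom_band k, Stmt6.Fhom_T k,
    Stmt6.Fhom_Tinv k, Stmt6.Fhom_P k⟩
end

section
/- Define φ: gl-pairs of elementary matrices by φ(E_{ij}, E_{kl}) = δ_{il}δ_{jk} if j < 0 and i ≥ 0; φ(E_{ij}, E_{kl}) = -δ_{il}δ_{jk} if i < 0 and j ≥ 0; and 0 otherwise. Then φ, extended bilinearly, is a 2-cocycle on the Lie algebra gl_∞ of ℤ×ℤ matrices with finitely many nonzero entries: φ(A,B) = -φ(B,A) and φ([A,B],C) + φ([B,C],A) + φ([C,A],B) = 0. -/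
/-- gl_∞: ℤ×ℤ matrices over k with finitely many nonzero entries. -/
abbrev glInf (k : Type*) [Field k] := (ℤ × ℤ) →₀ k

/-- Matrix multiplication on gl_∞. -/
noncomputable def glMul {k : Type*} [Field k] (A B : glInf k) : glInf k :=
  A.sum fun x a => B.sum fun y b =>
    if x.2 = y.1 then Finsupp.single (x.1, y.2) (a * b) else 0

/-- The Lie bracket [A,B] = AB - BA on gl_∞. -/
noncomputable def glBr {k : Type*} [Field k] (A B : glInf k) : glInf k :=
  glMul A B - glMul B A

/-- The elementary matrix E_{ij}. -/
noncomputable def glE {k : Type*} [Field k] (i j : ℤ) : glInf k :=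
  Finsupp.single (i, j) 1

/-- The sign entering the cocycle: 1 if j < 0 ≤ i, -1 if i < 0 ≤ j, 0 otherwise. -/
def glSgn (i j : ℤ) : ℤ :=
  if j < 0 ∧ 0 ≤ i then 1 else if i < 0 ∧ 0 ≤ j then -1 else 0

/-- The bilinear extension of φ(E_{ij}, E_{kl}) = δ_{il} δ_{jk} glSgn i j. -/
noncomputable def glPhi {k : Type*} [Field k] (A B : glInf k) : k :=
  A.sum fun x a => a * B (x.2, x.1) * ((glSgn x.1 x.2 : ℤ) : k)

/-! With `τ X = ∑_{i ≥ 0} X i i` (`trNonneg`), the cocycle is `φ A B = τ [A, B]`: the sign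
`glSgn i j` is `θ i - θ j` for the indicator `θ` of `0 ≤ ·`, which is exactly what `τ` sees of
`[E_ij, E_ji] = E_ii - E_jj`. Skew-symmetry of `φ` is then that of the bracket, and the
cocycle identity is `τ` applied to the Jacobi identity. -/

section

variable {k : Type*} [Field k]

lemma glMul_single_single (x y : ℤ × ℤ) (a b : k) :
    glMul (Finsupp.single x a) (Finsupp.single y b) =
      if x.2 = y.1 then Finsupp.single (x.1, y.2) (a * b) else 0 := by
  unfold glMul
  rw [Finsupp.sum_single_index (by simp), Finsupp.sum_single_index (by split_ifs <;> simp)]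

@[simp]
lemma glMul_zero_left (B : glInf k) : glMul 0 B = 0 := by
  simp [glMul]

@[simp]
lemma glMul_zero_right (A : glInf k) : glMul A 0 = 0 := by
  simp [glMul]

lemma glMul_add_left (A A' B : glInf k) : glMul (A + A') B = glMul A B + glMul A' B := by
  unfold glMul
  refine Finsupp.sum_add_index' (fun _ => by simp) fun x a a' => ?_
  rw [← Finsupp.sum_add]
  congr 1; funext y b
  split_ifs <;> simp [add_mul]

lemma glMul_add_right (A B B' : glInf k) : glMul A (B + B') = glMul A B + glMul A B' := by
  unfold glMul
  rw [← Finsupp.sum_add]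
  congr 1; funext x a
  refine Finsupp.sum_add_index' (fun _ => by split_ifs <;> simp) fun y b b' => ?_
  split_ifs <;> simp [mul_add]

lemma glMul_sub_left (A A' B : glInf k) : glMul (A - A') B = glMul A B - glMul A' B :=
  eq_sub_of_add_eq (by rw [← glMul_add_left, sub_add_cancel])

lemma glMul_sub_right (A B B' : glInf k) : glMul A (B - B') = glMul A B - glMul A B' :=
  eq_sub_of_add_eq (by rw [← glMul_add_right, sub_add_cancel])

lemma glMul_assoc (A B C : glInf k) : glMul (glMul A B) C = glMul A (glMul B C) := by
  induction A using Finsupp.induction_linear with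
  | zero => simp
  | add A A' hA hA' => rw [glMul_add_left, glMul_add_left, glMul_add_left, hA, hA']
  | single x a =>
  induction B using Finsupp.induction_linear with
  | zero => simp
  | add B B' hB hB' =>
    rw [glMul_add_right, glMul_add_left, glMul_add_left, glMul_add_right, hB, hB']
  | single y b =>
  induction C using Finsupp.induction_linear with
  | zero => simp
  | add C C' hC hC' => rw [glMul_add_right, glMul_add_right, glMul_add_right, hC, hC']
  | single z c =>
  obtain ⟨x1, x2⟩ := x; obtain ⟨y1, y2⟩ := y
  rw [glMul_single_single, glMul_single_single]
  by_cases hxy : x2 = y1 <;> by_cases hyz : y2 = z.1 <;>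
    simp only [hxy, hyz, glMul_single_single, glMul_zero_left, glMul_zero_right, mul_assoc,
      if_true, if_false]

lemma glBr_add_left (A A' B : glInf k) : glBr (A + A') B = glBr A B + glBr A' B := by
  simp only [glBr, glMul_add_left, glMul_add_right]; abel

lemma glBr_add_right (A B B' : glInf k) : glBr A (B + B') = glBr A B + glBr A B' := by
  simp only [glBr, glMul_add_left, glMul_add_right]; abel

lemma glBr_swap (A B : glInf k) : glBr B A = -glBr A B :=
  (neg_sub _ _).symm

lemma glBr_jacobi (A B C : glInf k) :
    glBr (glBr A B) C + glBr (glBr B C) A + glBr (glBr C A) B = 0 := by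
  simp only [glBr, glMul_sub_left, glMul_sub_right, glMul_assoc]
  abel

variable (k) in
noncomputable def trNonneg : glInf k →ₗ[k] k :=
  Finsupp.linearCombination k fun x => if x.1 = x.2 ∧ 0 ≤ x.1 then 1 else 0

lemma glSgn_eq_sub (i j : ℤ) :
    glSgn i j = (if 0 ≤ i then 1 else 0) - (if 0 ≤ j then 1 else 0) := by
  unfold glSgn; split_ifs <;> omega

lemma glPhi_single_single (x y : ℤ × ℤ) (a b : k) :
    glPhi (Finsupp.single x a) (Finsupp.single y b) =
      if y = (x.2, x.1) then a * b * ((glSgn x.1 x.2 : ℤ) : k) else 0 := by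
  unfold glPhi
  rw [Finsupp.sum_single_index (by simp), Finsupp.single_apply]
  split_ifs <;> simp

@[simp]
lemma glPhi_zero_left (B : glInf k) : glPhi 0 B = 0 := by
  simp [glPhi]

@[simp]
lemma glPhi_zero_right (A : glInf k) : glPhi A 0 = 0 := by
  simp [glPhi]

lemma glPhi_add_left (A A' B : glInf k) : glPhi (A + A') B = glPhi A B + glPhi A' B := by
  unfold glPhi
  exact Finsupp.sum_add_index' (fun _ => by simp) fun _ _ _ => by ring

lemma glPhi_add_right (A B B' : glInf k) : glPhi A (B + B') = glPhi A B + glPhi A B' := by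
  unfold glPhi
  rw [← Finsupp.sum_add]
  congr 1; funext x a
  simp only [Finsupp.add_apply]; ring

lemma glPhi_eq_trNonneg_glBr (A B : glInf k) : glPhi A B = trNonneg k (glBr A B) := by
  induction A using Finsupp.induction_linear with
  | zero => simp [glBr]
  | add A A' hA hA' => rw [glPhi_add_left, glBr_add_left, map_add, hA, hA']
  | single x a =>
  induction B using Finsupp.induction_linear with
  | zero => simp [glBr]
  | add B B' hB hB' => rw [glPhi_add_right, glBr_add_right, map_add, hB, hB']
  | single y b =>
  obtain ⟨x1, x2⟩ := x; obtain ⟨y1, y2⟩ := y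
  simp only [glPhi_single_single, glBr, glMul_single_single, map_sub, trNonneg,
    glSgn_eq_sub, Prod.mk.injEq, apply_ite, map_zero, Finsupp.linearCombination_single,
    smul_eq_mul, mul_comm b]
  split_ifs <;> grind

end

theorem stmt_8_general (k : Type*) [Field k] :
    (∀ i j a b : ℤ, glPhi (glE i j) (glE a b) =
      (if j = a ∧ i = b then ((glSgn i j : ℤ) : k) else 0)) ∧
    (∀ A B : glInf k, glPhi A B = -glPhi B A) ∧
    (∀ A B C : glInf k,
      glPhi (glBr A B) C + glPhi (glBr B C) A + glPhi (glBr C A) B = 0) := by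
  refine ⟨fun i j a b => ?_, fun A B => ?_, fun A B C => ?_⟩
  · simp only [glE, glPhi_single_single, Prod.mk.injEq, one_mul]
    grind
  · rw [glPhi_eq_trNonneg_glBr, glPhi_eq_trNonneg_glBr, glBr_swap, map_neg]
  · simp only [glPhi_eq_trNonneg_glBr, ← map_add, glBr_jacobi, map_zero]

/-- φ takes the prescribed values on elementary matrices, is skew-symmetric,
and is a 2-cocycle on the Lie algebra gl_∞. -/
theorem stmt_8 (k : Type*) [Field k] [CharZero k] :
    (∀ i j a b : ℤ, glPhi (glE i j) (glE a b) =
      (if j = a ∧ i = b then ((glSgn i j : ℤ) : k) else 0)) ∧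
    (∀ A B : glInf k, glPhi A B = -glPhi B A) ∧
    (∀ A B C : glInf k,
      glPhi (glBr A B) C + glPhi (glBr B C) A + glPhi (glBr C A) B = 0) :=
  stmt_8_general k
end

section
/- Let φ be the 2-cocycle on infinite matrices given by φ(E_{ij}, E_{kl}) = δ_{il}δ_{jk}(𝟙[j<0, i≥0] − 𝟙[i<0, j≥0]). Under the embedding of the Weyl algebra into matrices sending p_m(k) = (1/m!)pᵐtᵏ to (-1)ᵐ Σᵢ C(i+m,m) E_{i,i+m-k}, the restriction of φ satisfies φ(p_m(k), p_n(l)) = δ_{m+n, k+l} · (-1)ᵐ · m! · n! / (m!·n!) · C(k, m+n+1), i.e. φ(p_m(k), p_n(l)) = δ_{m+n,k+l} (-1)ᵐ C(k, m+n+1). -/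
/-- The 2-cocycle φ(A,B) = Σ_{i,j} A_{ij} B_{ji} glSgn i j, extended to band matrices
(the sum has finitely many nonzero terms for band matrices). -/
noncomputable def bandPhi {k : Type*} [Field k] (A B : ℤ → ℤ → k) : k :=
  ∑ᶠ (i : ℤ) (j : ℤ), A i j * B j i * ((glSgn i j : ℤ) : k)

/-- The image of p_m(n) = (1/m!)pᵐtⁿ in infinite matrices:
(-1)ᵐ Σ_{i∈ℤ} C(i+m,m) E_{i,i+m-n}. -/
noncomputable def pMat {k : Type*} [Field k] (m : ℕ) (n : ℤ) : ℤ → ℤ → k :=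
  fun i j => if j = i + m - n then (-1 : k) ^ m * ((Ring.choose (i + m) m : ℤ) : k) else 0

/-!
Both matrices are supported on single diagonals, so `φ(p_m(a), p_n(b))` vanishes unless
`m + n = a + b` and otherwise collapses to one sum over `i` of `A_{i,i-d} B_{i-d,i}`, `d = a - m`.
The sign `glSgn i (i - d)` is exactly the orientation weight of the interval `[0, d)`, so the
result is an oriented sum `∑_{0 ≤ i < d}`. For `d ≥ 0`, upper negation turns the second binomial
into `(-1)ⁿ C(d-1-i, n)` and the sum becomes the Chu–Vandermonde identity
`∑_{i<D} C(i,m) C(D-1-i,n) = C(D, m+n+1)`. For `d < 0`, shifting the summation index by `d`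
exchanges the roles of `m` and `n` and reduces to the first case.
-/

open Finset

theorem Nat.sum_antidiagonal_choose_mul_choose (m n N : ℕ) :
    ∑ ij ∈ antidiagonal N, ij.1.choose m * ij.2.choose n = (N + 1).choose (m + n + 1) := by
  induction N generalizing n with
  | zero =>
    rcases m with _ | _ <;> rcases n with _ | _ <;> simp [Nat.choose_eq_zero_of_lt]
  | succ N ih =>
    rw [Nat.sum_antidiagonal_succ']
    cases n with
    | zero =>
      have hockey := ih 0
      simp only [Nat.choose_zero_right, mul_one, add_zero] at hockey ⊢
      rw [hockey, Nat.choose_succ_succ' (N + 1), add_comm]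
    | succ n =>
      simp only [Nat.choose_zero_succ, mul_zero, zero_add, Nat.choose_succ_succ' _ n, mul_add,
        sum_add_distrib, ih]
      rw [Nat.choose_succ_succ' (N + 1), add_assoc m n 1]

theorem Nat.sum_range_choose_mul_choose (m n D : ℕ) :
    ∑ i ∈ range D, i.choose m * (D - 1 - i).choose n = D.choose (m + n + 1) := by
  cases D with
  | zero => simp
  | succ N =>
    rw [← Nat.sum_antidiagonal_choose_mul_choose,
      Nat.sum_antidiagonal_eq_sum_range_succ (fun i j => i.choose m * j.choose n)]
    simp

theorem Int.ringChoose_natCast_sub_succ (n e : ℕ) :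
    Ring.choose ((n : ℤ) - (e + 1)) n = (-1) ^ n * e.choose n := by
  have := Ring.choose_neg (((e:ℤ) + 1) - n) n
  rw [neg_sub, show ((e:ℤ) + 1 - n + n - 1) = e by ring, Ring.choose_natCast] at this
  simp [this, Int.negOnePow_def, Units.smul_def]

theorem sum_range_ringChoose_mul_ringChoose_sub (m n D : ℕ) :
    ∑ i ∈ range D, Ring.choose ((i : ℤ) + m) m * Ring.choose ((i : ℤ) - D + n) n =
      (-1) ^ n * Ring.choose ((m : ℤ) + D) (m + n + 1) := by
  have hterm : ∀ i ∈ range D, Ring.choose ((i : ℤ) + m) m * Ring.choose ((i : ℤ) - D + n) n =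
      (-1) ^ n * ((m + i).choose m * (m + D - 1 - (m + i)).choose n : ℕ) := by
    intro i hi
    have hneg : (i : ℤ) - D + n = n - ((D - 1 - i : ℕ) + 1) := by
      have := mem_range.1 hi
      omega
    rw [hneg, Int.ringChoose_natCast_sub_succ, ← Nat.cast_add, Ring.choose_natCast, add_comm i m,
      show m + D - 1 - (m + i) = D - 1 - i by omega]
    push_cast
    ring
  have hupper := Nat.sum_range_choose_mul_choose m n (m + D)
  rw [sum_range_add, sum_eq_zero fun u hu => by simp [Nat.choose_eq_zero_of_lt (mem_range.1 hu)],
    zero_add] at hupper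
  rw [sum_congr rfl hterm, ← mul_sum, ← Nat.cast_sum, hupper, ← Ring.choose_natCast]
  push_cast
  rfl

noncomputable def orientedSum {M : Type*} [AddCommGroup M] (f : ℤ → M) (d : ℤ) : M :=
  ∑ i ∈ Ico 0 d, f i - ∑ i ∈ Ico d 0, f i

section orientedSum

variable {M : Type*} [AddCommGroup M]

theorem orientedSum_natCast (f : ℤ → M) (D : ℕ) : orientedSum f D = ∑ i ∈ range D, f i := by
  rw [orientedSum, Ico_eq_empty_of_le (Nat.cast_nonneg D), sum_empty, sub_zero,
    Int.Ico_eq_finset_map, sum_map]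
  simp

theorem orientedSum_eq_neg_orientedSum_comp_add (f : ℤ → M) (d : ℤ) :
    orientedSum f d = -orientedSum (fun j => f (j + d)) (-d) := by
  simp only [orientedSum, sum_Ico_add', zero_add, neg_add_cancel, neg_sub]

theorem mul_orientedSum {R : Type*} [Ring R] (c : R) (f : ℤ → R) (d : ℤ) :
    c * orientedSum f d = orientedSum (fun i => c * f i) d := by
  simp only [orientedSum, mul_sub, mul_sum]

theorem Int.cast_orientedSum {R : Type*} [Ring R] (f : ℤ → ℤ) (d : ℤ) :
    ((orientedSum f d : ℤ) : R) = orientedSum (fun i => (f i : R)) d := by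
  simp [orientedSum]

end orientedSum

theorem orientedSum_ringChoose_mul_ringChoose (m n : ℕ) (d : ℤ) :
    orientedSum (fun i => Ring.choose (i + m) m * Ring.choose (i - d + n) n) d =
      (-1) ^ n * Ring.choose (m + d) (m + n + 1) := by
  obtain ⟨D, rfl | rfl⟩ := Int.eq_nat_or_neg d
  · rw [orientedSum_natCast, sum_range_ringChoose_mul_ringChoose_sub]
  · rw [orientedSum_eq_neg_orientedSum_comp_add, neg_neg]
    simp only [sub_neg_eq_add, ← sub_eq_add_neg, sub_add_cancel, mul_comm (Ring.choose _ m)]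
    rw [orientedSum_natCast, sum_range_ringChoose_mul_ringChoose_sub,
      show (m : ℤ) - D = ((m + n + 1 : ℕ) : ℤ) - ((n + D : ℕ) + 1) by push_cast; ring,
      Int.ringChoose_natCast_sub_succ, ← Nat.cast_add, Ring.choose_natCast, add_comm n m,
      ← mul_assoc, ← pow_add, show n + (m + n + 1) = m + 1 + 2 * n by ring, pow_add, pow_mul]
    ring

theorem glSgn_sub_eq (i d : ℤ) :
    glSgn i (i - d) = (if i ∈ Ico 0 d then 1 else 0) - (if i ∈ Ico d 0 then 1 else 0) := by
  unfold glSgn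
  simp only [mem_Ico]
  split_ifs <;> omega

theorem finsum_mul_glSgn_sub {R : Type*} [Ring R] (f : ℤ → R) (d : ℤ) :
    ∑ᶠ i, f i * (glSgn i (i - d) : R) = orientedSum f d := by
  have hsupp : (Function.support fun i => f i * (glSgn i (i - d) : R)) ⊆ ↑(Ico 0 d ∪ Ico d 0) := by
    intro i hi
    rw [Function.mem_support] at hi
    simp only [coe_union, Set.mem_union, mem_coe]
    by_contra hout
    obtain ⟨hpos, hneg⟩ := not_or.1 hout
    apply hi
    rw [glSgn_sub_eq, if_neg hpos, if_neg hneg, sub_zero, Int.cast_zero, mul_zero]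
  rw [finsum_eq_sum_of_support_subset _ hsupp]
  simp only [glSgn_sub_eq, Int.cast_sub, Int.cast_ite, Int.cast_one, Int.cast_zero, mul_sub,
    mul_ite, mul_one, mul_zero, sum_sub_distrib, sum_ite_mem,
    union_inter_cancel_left, union_inter_cancel_right, orientedSum]

theorem bandPhi_eq_finsum_of_eq_zero_off_diagonal {k : Type*} [Field k] {A : ℤ → ℤ → k} (c : ℤ)
    (hA : ∀ i j, j ≠ i + c → A i j = 0) (B : ℤ → ℤ → k) :
    bandPhi A B = ∑ᶠ i, A i (i + c) * B (i + c) i * (glSgn i (i + c) : k) :=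
  finsum_congr fun i => finsum_eq_single _ _ fun j hj => by simp [hA i j hj]

theorem pMat_eq_zero_off_diagonal {k : Type*} [Field k] (m : ℕ) (a i j : ℤ)
    (hij : j ≠ i + (m - a)) : pMat (k := k) m a i j = 0 :=
  if_neg (by omega)

theorem stmt_9_general (k : Type*) [Field k] :
    ∀ (m n : ℕ) (a b : ℤ),
      bandPhi (pMat (k := k) m a) (pMat (k := k) n b) =
        if ((m + n : ℕ) : ℤ) = a + b
        then (-1 : k) ^ m * ((Ring.choose a (m + n + 1) : ℤ) : k)
        else 0 := by
  intro m n a b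
  rw [bandPhi_eq_finsum_of_eq_zero_off_diagonal (m - a) (pMat_eq_zero_off_diagonal m a)]
  split_ifs with hdeg
  · have hterm : ∀ i : ℤ, pMat (k := k) m a i (i + (m - a)) * pMat n b (i + (m - a)) i *
        (glSgn i (i + (m - a)) : k) = (-1) ^ (m + n) *
          ((Ring.choose (i + m) m * Ring.choose (i - (a - m) + n) n : ℤ) : k) *
          (glSgn i (i - (a - m)) : k) := by
      intro i
      unfold pMat
      rw [if_pos (show i + (m - a) = i + m - a by ring),
        if_pos (show i = i + (m - a) + n - b by omega), show i + (m - a) = i - (a - m) by ring]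
      push_cast
      ring
    rw [finsum_congr hterm, finsum_mul_glSgn_sub, ← mul_orientedSum, ← Int.cast_orientedSum,
      orientedSum_ringChoose_mul_ringChoose, add_sub_cancel, Int.cast_mul,
      Int.cast_pow, Int.cast_neg, Int.cast_one, ← mul_assoc, ← pow_add,
      show m + n + n = m + 2 * n by ring, pow_add, pow_mul]
    simp
  · refine finsum_eq_zero_of_forall_eq_zero fun i => ?_
    rw [pMat_eq_zero_off_diagonal n b _ _ (by omega), mul_zero, zero_mul]

/-- Restriction of the 2-cocycle φ to the image of the Weyl algebra:
φ(p_m(k), p_n(l)) = δ_{m+n, k+l} (-1)ᵐ C(k, m+n+1). -/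
theorem stmt_9 (k : Type*) [Field k] [CharZero k] :
    ∀ (m n : ℕ) (a b : ℤ),
      bandPhi (pMat (k := k) m a) (pMat (k := k) n b) =
        if ((m + n : ℕ) : ℤ) = a + b
        then (-1 : k) ^ m * ((Ring.choose a (m + n + 1) : ℤ) : k)
        else 0 :=
  stmt_9_general k
end

section
/- Let Λ be a free ℤ-module with an integer-valued symmetric bilinear form. There exists a bimultiplicative map ε: Λ × Λ → {±1} satisfying ε(α,β) = (−1)^{(α|α)(β|β)} (−1)^{(α|β)} ε(β,α) for all α, β ∈ Λ. -/
/-!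
Modulo 2, the map `a ↦ (a|a)` is additive and `x² = x`, so `Q(a, b) = (a|a)(b|b) + (a|b)` is an
alternating `𝔽₂`-valued bilinear form on `Λ`. Any alternating form on a free module is `C - Cᵀ`
for a bilinear `C` (its strictly lower-triangular part in a well-ordered basis), and then
`ε = (-1)^C` works.
-/

theorem LinearMap.IsAlt.exists_eq_sub_flip {R M N : Type*} [CommRing R] [AddCommGroup M]
    [Module R M] [Module.Free R M] [AddCommGroup N] [Module R N]
    {Q : M →ₗ[R] M →ₗ[R] N} (hQ : Q.IsAlt) :
    ∃ C : M →ₗ[R] M →ₗ[R] N, Q = C - C.flip := by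
  classical
  let b := Module.Free.chooseBasis R M
  let : LinearOrder (Module.Free.ChooseBasisIndex R M) := IsWellOrder.linearOrder WellOrderingRel
  refine ⟨b.constr R fun i => b.constr R fun j => if j < i then Q (b i) (b j) else 0,
    LinearMap.ext_basis b b fun i j => ?_⟩
  rcases lt_trichotomy j i with h | rfl | h
  · simp [h, h.not_gt]
  · simp [hQ.self_eq_zero]
  · simp [h, h.not_gt, ← hQ.neg (b j)]

section

variable {Λ : Type*} [AddCommGroup Λ] [Module ℤ Λ]

def normModTwo (B : Λ →ₗ[ℤ] Λ →ₗ[ℤ] ℤ) (hB : ∀ x y, B x y = B y x) : Λ →ₗ[ℤ] ZMod 2 where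
  toFun a := B a a
  map_add' a a' := by
    simp only [map_add, LinearMap.add_apply, hB a' a, Int.cast_add]
    linear_combination CharTwo.add_self_eq_zero ((B a a' : ℤ) : ZMod 2)
  map_smul' c a := by
    simp only [map_smul, LinearMap.smul_apply, smul_eq_mul, Int.cast_mul, RingHom.id_apply]
    linear_combination ((B a a : ℤ) : ZMod 2) * ZMod.pow_card (c : ZMod 2)

def signForm (B : Λ →ₗ[ℤ] Λ →ₗ[ℤ] ℤ) (hB : ∀ x y, B x y = B y x) : Λ →ₗ[ℤ] Λ →ₗ[ℤ] ZMod 2 :=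
  LinearMap.mk₂ ℤ (fun a b => normModTwo B hB a * normModTwo B hB b + B a b)
    (fun a a' b => by simp only [map_add, LinearMap.add_apply, Int.cast_add]; ring)
    (fun c a b => by simp only [map_smul, LinearMap.smul_apply, smul_eq_mul, Int.cast_mul]; ring)
    (fun a b b' => by simp only [map_add, Int.cast_add]; ring)
    (fun c a b => by simp only [map_smul, smul_eq_mul, Int.cast_mul]; ring)

theorem signForm_apply (B : Λ →ₗ[ℤ] Λ →ₗ[ℤ] ℤ) (hB : ∀ x y, B x y = B y x) (a b : Λ) :
    signForm B hB a b = ((B a a * B b b + B a b : ℤ) : ZMod 2) := by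
  push_cast
  rfl

theorem signForm_isAlt (B : Λ →ₗ[ℤ] Λ →ₗ[ℤ] ℤ) (hB : ∀ x y, B x y = B y x) :
    (signForm B hB).IsAlt := fun a => by
  rw [signForm_apply, Int.cast_add, Int.cast_mul, ← sq, ZMod.pow_card, CharTwo.add_self_eq_zero]

end

theorem stmt_12_general (Λ : Type*) [AddCommGroup Λ] [Module ℤ Λ]
    [Module.Free ℤ Λ]
    (B : Λ →ₗ[ℤ] Λ →ₗ[ℤ] ℤ) (hsymm : ∀ x y, B x y = B y x) :
    ∃ ε : Λ → Λ → ℤˣ,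
      (∀ a a' b : Λ, ε (a + a') b = ε a b * ε a' b) ∧
      (∀ a b b' : Λ, ε a (b + b') = ε a b * ε a b') ∧
      (∀ a b : Λ, ε a b =
        (-1 : ℤˣ) ^ (B a a * B b b) * (-1 : ℤˣ) ^ (B a b) * ε b a) := by
  obtain ⟨C, hC⟩ := (signForm_isAlt B hsymm).exists_eq_sub_flip
  refine ⟨fun a b => (-1 : ℤˣ) ^ C a b, fun a a' b => ?_, fun a b b' => ?_, fun a b => ?_⟩
  · simp only [map_add, LinearMap.add_apply, uzpow_add]
  · simp only [map_add, uzpow_add]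
  · have hCab : C a b = signForm B hsymm a b + C b a := by
      rw [hC, LinearMap.sub_apply, LinearMap.sub_apply, LinearMap.flip_apply, sub_add_cancel]
    dsimp only
    rw [hCab, uzpow_add, signForm_apply, uzpow_intCast, zpow_add]

/-- On a free ℤ-module of finite rank with an integer-valued symmetric bilinear form,
there exists a bimultiplicative map ε : Λ × Λ → {±1} with
ε(α,β) = (−1)^{(α|α)(β|β)} (−1)^{(α|β)} ε(β,α). -/
theorem stmt_12 (Λ : Type*) [AddCommGroup Λ] [Module ℤ Λ]
    [Module.Free ℤ Λ] [Module.Finite ℤ Λ]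
    (B : Λ →ₗ[ℤ] Λ →ₗ[ℤ] ℤ) (hsymm : ∀ x y, B x y = B y x) :
    ∃ ε : Λ → Λ → ℤˣ,
      (∀ a a' b : Λ, ε (a + a') b = ε a b * ε a' b) ∧
      (∀ a b b' : Λ, ε a (b + b') = ε a b * ε a b') ∧
      (∀ a b : Λ, ε a b =
        (-1 : ℤˣ) ^ (B a a * B b b) * (-1 : ℤˣ) ^ (B a b) * ε b a) :=
  stmt_12_general Λ B hsymm
end

section
/- Let M be the Lie algebra of ℤ×ℤ matrices over k with finitely many nonzero diagonals, J = Σ_{i<0} E_{ii}, and φ(A,B) = tr([A,J]B). Then φ is well-defined (the trace is a finite sum), skew-symmetric, and a 2-cocycle: φ([A,B],C) + φ([B,C],A) + φ([C,A],B) = 0 for all A, B, C ∈ M. -/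
/-- A is a band matrix: entries vanish far from the main diagonal. -/
def IsBandMat {k : Type*} [Field k] (A : ℤ → ℤ → k) : Prop :=
  ∃ N : ℕ, ∀ i j : ℤ, (N : ℤ) < |i - j| → A i j = 0

/-- Product of infinite matrices (the entry sums are finite for band matrices). -/
noncomputable def matMul {k : Type*} [Field k] (A B : ℤ → ℤ → k) : ℤ → ℤ → k :=
  fun i l => ∑ᶠ j : ℤ, A i j * B j l

/-- The Lie bracket [A,B] = AB − BA. -/
noncomputable def matBr {k : Type*} [Field k] (A B : ℤ → ℤ → k) : ℤ → ℤ → k :=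
  fun i j => matMul A B i j - matMul B A i j

/-- The matrix J = Σ_{i<0} E_{ii}. -/
def Jmat (k : Type*) [Field k] : ℤ → ℤ → k :=
  fun i j => if i = j ∧ i < 0 then 1 else 0

/-- The trace: the sum of the diagonal entries (finitely many nonzero ones
for the matrices to which it is applied below). -/
noncomputable def matTr {k : Type*} [Field k] (A : ℤ → ℤ → k) : k :=
  ∑ᶠ i : ℤ, A i i

/-- φ(A,B) = tr([A,J]B). -/
noncomputable def phiM {k : Type*} [Field k] (A B : ℤ → ℤ → k) : k :=
  matTr (matMul (matBr A (Jmat k)) B)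

section helpers

variable {k : Type*} [Field k]

/-- indicator of negativity -/
def ccf (k : Type*) [Field k] : ℤ → k := fun i => if i < 0 then 1 else 0

lemma brJ (A : ℤ → ℤ → k) (i l : ℤ) :
    matBr A (Jmat k) i l = A i l * (ccf k l - ccf k i) := by
  have h1 : matMul A (Jmat k) i l = A i l * ccf k l := by
    simp only [matMul]
    rw [finsum_eq_single _ l]
    · simp [Jmat, ccf]
    · intro x hx
      simp [Jmat, hx]
  have h2 : matMul (Jmat k) A i l = ccf k i * A i l := by
    simp only [matMul]
    rw [finsum_eq_single _ i]
    · simp [Jmat, ccf]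
    · intro x hx
      simp [Jmat, (hx.symm : i ≠ x)]
  simp only [matBr]
  rw [h1, h2]; ring

lemma key_mem {A : ℤ → ℤ → k} {Na : ℕ}
    (hA : ∀ i j : ℤ, (Na : ℤ) < |i - j| → A i j = 0)
    {N : ℕ} (hN : Na ≤ N) {i j : ℤ} (h : A i j * (ccf k j - ccf k i) ≠ 0) :
    i ∈ Finset.Icc (-(N : ℤ)) N ∧ j ∈ Finset.Icc (-(N : ℤ)) N := by
  have ha : A i j ≠ 0 := by
    intro h0; exact h (by rw [h0, zero_mul])
  have hc : ccf k j - ccf k i ≠ 0 := by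
    intro h0; exact h (by rw [h0, mul_zero])
  have hb : ¬ ((Na : ℤ) < |i - j|) := fun hlt => ha (hA i j hlt)
  push_neg at hb
  rw [abs_le] at hb
  have hsign : (i < 0 ∧ 0 ≤ j) ∨ (j < 0 ∧ 0 ≤ i) := by
    simp only [ccf] at hc
    by_cases hi : i < 0 <;> by_cases hj : j < 0 <;> simp [hi, hj] at hc <;> omega
  constructor <;> · rw [Finset.mem_Icc]; omega

lemma phiM_diag (A B : ℤ → ℤ → k) (Na N : ℕ)
    (hA : ∀ i j : ℤ, (Na : ℤ) < |i - j| → A i j = 0) (hN : Na ≤ N) (i : ℤ) :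
    matMul (matBr A (Jmat k)) B i i
      = ∑ j ∈ Finset.Icc (-(N : ℤ)) N, A i j * (ccf k j - ccf k i) * B j i := by
  simp only [matMul]
  have hcong : ∀ j, matBr A (Jmat k) i j * B j i = A i j * (ccf k j - ccf k i) * B j i := by
    intro j; rw [brJ]
  rw [finsum_congr hcong]
  apply finsum_eq_finset_sum_of_support_subset
  intro j hj
  simp only [Function.mem_support] at hj
  have h : A i j * (ccf k j - ccf k i) ≠ 0 := by
    intro h0; exact hj (by rw [h0, zero_mul])
  exact Finset.mem_coe.mpr (key_mem hA hN h).2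

lemma phiM_eq (A B : ℤ → ℤ → k) (Na N : ℕ)
    (hA : ∀ i j : ℤ, (Na : ℤ) < |i - j| → A i j = 0) (hN : Na ≤ N) :
    phiM A B = ∑ i ∈ Finset.Icc (-(N : ℤ)) N, ∑ j ∈ Finset.Icc (-(N : ℤ)) N,
      A i j * (ccf k j - ccf k i) * B j i := by
  simp only [phiM, matTr]
  rw [finsum_congr (phiM_diag A B Na N hA hN)]
  apply finsum_eq_finset_sum_of_support_subset
  intro i hi
  simp only [Function.mem_support] at hi
  obtain ⟨j, _, hne⟩ := Finset.exists_ne_zero_of_sum_ne_zero hi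
  have h : A i j * (ccf k j - ccf k i) ≠ 0 := by
    intro h0; exact hne (by rw [h0, zero_mul])
  exact Finset.mem_coe.mpr (key_mem hA hN h).1

lemma matBr_band {A B : ℤ → ℤ → k} {Na Nb : ℕ}
    (hA : ∀ i j : ℤ, (Na : ℤ) < |i - j| → A i j = 0)
    (hB : ∀ i j : ℤ, (Nb : ℤ) < |i - j| → B i j = 0) :
    ∀ i j : ℤ, ((Na + Nb : ℕ) : ℤ) < |i - j| → matBr A B i j = 0 := by
  intro i j hij
  rw [lt_abs] at hij
  have h1 : matMul A B i j = 0 := by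
    simp only [matMul]
    apply finsum_eq_zero_of_forall_eq_zero
    intro l
    by_cases hl : (Na : ℤ) < |i - l|
    · rw [hA i l hl, zero_mul]
    · push_neg at hl; rw [abs_le] at hl
      rw [hB l j (by rw [lt_abs]; omega), mul_zero]
  have h2 : matMul B A i j = 0 := by
    simp only [matMul]
    apply finsum_eq_zero_of_forall_eq_zero
    intro l
    by_cases hl : (Nb : ℤ) < |i - l|
    · rw [hB i l hl, zero_mul]
    · push_neg at hl; rw [abs_le] at hl
      rw [hA l j (by rw [lt_abs]; omega), mul_zero]
  simp [matBr, h1, h2]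

lemma matBr_entry (A B : ℤ → ℤ → k) (i j : ℤ) (s : Finset ℤ)
    (h : ∀ l, l ∉ s → A i l = 0 ∧ B i l = 0) :
    matBr A B i j = ∑ l ∈ s, (A i l * B l j - B i l * A l j) := by
  simp only [matBr, matMul]
  rw [Finset.sum_sub_distrib]
  congr 1
  · apply finsum_eq_finset_sum_of_support_subset
    intro l hl
    simp only [Function.mem_support] at hl
    by_contra hls
    exact hl (by rw [(h l hls).1, zero_mul])
  · apply finsum_eq_finset_sum_of_support_subset
    intro l hl
    simp only [Function.mem_support] at hl
    by_contra hls
    exact hl (by rw [(h l hls).2, zero_mul])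

lemma triple_vanish {A B C : ℤ → ℤ → k} {Na Nb : ℕ}
    (hA : ∀ i j : ℤ, (Na : ℤ) < |i - j| → A i j = 0)
    (hB : ∀ i j : ℤ, (Nb : ℤ) < |i - j| → B i j = 0)
    (i j l : ℤ)
    (h : i ∉ Finset.Icc (-((Na + Nb : ℕ) : ℤ)) ((Na + Nb : ℕ) : ℤ)
       ∨ j ∉ Finset.Icc (-((Na + Nb : ℕ) : ℤ)) ((Na + Nb : ℕ) : ℤ)) :
    (A i l * B l j - B i l * A l j) * (ccf k j - ccf k i) * C j i = 0 := by
  by_cases hc : ccf k j - ccf k i = 0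
  · rw [hc, mul_zero, zero_mul]
  have hsign : (i < 0 ∧ 0 ≤ j) ∨ (j < 0 ∧ 0 ≤ i) := by
    simp only [ccf] at hc
    by_cases hi : i < 0 <;> by_cases hj : j < 0 <;> simp [hi, hj] at hc <;> omega
  have hgt : ((Na : ℤ) + Nb) < |i - j| := by
    rcases h with h | h <;> rw [Finset.mem_Icc] at h <;> · rw [lt_abs]; push_cast at h; omega
  rw [lt_abs] at hgt
  have h1 : A i l * B l j = 0 := by
    by_cases hl : (Na : ℤ) < |i - l|
    · rw [hA i l hl, zero_mul]
    · push_neg at hl; rw [abs_le] at hl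
      rw [hB l j (by rw [lt_abs]; omega), mul_zero]
  have h2 : B i l * A l j = 0 := by
    by_cases hl : (Nb : ℤ) < |i - l|
    · rw [hB i l hl, zero_mul]
    · push_neg at hl; rw [abs_le] at hl
      rw [hA l j (by rw [lt_abs]; omega), mul_zero]
  rw [h1, h2, sub_zero, zero_mul, zero_mul]

lemma phi_triple (A B C : ℤ → ℤ → k) (Na Nb : ℕ)
    (hA : ∀ i j : ℤ, (Na : ℤ) < |i - j| → A i j = 0)
    (hB : ∀ i j : ℤ, (Nb : ℤ) < |i - j| → B i j = 0)
    (R : ℕ) (hR : Na + Nb + Na + Nb ≤ R) :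
    phiM (matBr A B) C =
      ∑ i ∈ Finset.Icc (-(R : ℤ)) R, ∑ j ∈ Finset.Icc (-(R : ℤ)) R,
        ∑ l ∈ Finset.Icc (-(R : ℤ)) R,
          (A i l * B l j - B i l * A l j) * (ccf k j - ccf k i) * C j i := by
  set s : Finset ℤ := Finset.Icc (-((Na + Nb : ℕ) : ℤ)) ((Na + Nb : ℕ) : ℤ) with hs
  set t : Finset ℤ := Finset.Icc (-(R : ℤ)) R with ht
  have hst : s ⊆ t := by
    rw [hs, ht]
    apply Finset.Icc_subset_Icc <;> · push_cast; omega
  have step1 : phiM (matBr A B) C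
      = ∑ i ∈ s, ∑ j ∈ s, matBr A B i j * (ccf k j - ccf k i) * C j i :=
    phiM_eq (matBr A B) C (Na + Nb) (Na + Nb) (matBr_band hA hB) le_rfl
  have step2 : ∀ i ∈ s, ∀ j : ℤ,
      matBr A B i j = ∑ l ∈ t, (A i l * B l j - B i l * A l j) := by
    intro i hi j
    apply matBr_entry
    intro l hl
    rw [hs, Finset.mem_Icc] at hi
    rw [ht, Finset.mem_Icc] at hl
    constructor
    · apply hA; rw [lt_abs]; push_cast at hi ⊢; omega
    · apply hB; rw [lt_abs]; push_cast at hi ⊢; omega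
  rw [step1]
  have step3 : ∑ i ∈ s, ∑ j ∈ s, matBr A B i j * (ccf k j - ccf k i) * C j i
      = ∑ i ∈ s, ∑ j ∈ s, ∑ l ∈ t,
          (A i l * B l j - B i l * A l j) * (ccf k j - ccf k i) * C j i := by
    refine Finset.sum_congr rfl fun i hi => Finset.sum_congr rfl fun j _ => ?_
    rw [step2 i hi j, Finset.sum_mul, Finset.sum_mul]
  rw [step3]
  have step4 : ∑ i ∈ s, ∑ j ∈ s, ∑ l ∈ t,
          (A i l * B l j - B i l * A l j) * (ccf k j - ccf k i) * C j i
      = ∑ i ∈ s, ∑ j ∈ t, ∑ l ∈ t,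
          (A i l * B l j - B i l * A l j) * (ccf k j - ccf k i) * C j i := by
    refine Finset.sum_congr rfl fun i _ => ?_
    refine Finset.sum_subset hst fun j _ hjs => ?_
    exact Finset.sum_eq_zero fun l _ => triple_vanish hA hB i j l (Or.inr hjs)
  rw [step4]
  refine Finset.sum_subset hst fun i _ his => ?_
  refine Finset.sum_eq_zero fun j _ => ?_
  exact Finset.sum_eq_zero fun l _ => triple_vanish hA hB i j l (Or.inl his)

lemma sum3_cyc (s : Finset ℤ) (g : ℤ → ℤ → ℤ → k) :
    ∑ i ∈ s, ∑ j ∈ s, ∑ l ∈ s, g i j l = ∑ i ∈ s, ∑ j ∈ s, ∑ l ∈ s, g l i j := by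
  rw [Finset.sum_comm]
  refine Finset.sum_congr rfl fun j _ => ?_
  rw [Finset.sum_comm]

end helpers

/-- On the Lie algebra of ℤ×ℤ band matrices, φ(A,B) = tr([A,J]B) is well defined
(the trace is a finite sum), skew-symmetric, and a 2-cocycle. -/
theorem stmt_17 (k : Type*) [Field k] [CharZero k] :
    ∀ A B C : ℤ → ℤ → k, IsBandMat A → IsBandMat B → IsBandMat C →
      (Function.support
        (fun i : ℤ => matMul (matBr A (Jmat k)) B i i)).Finite ∧
      phiM A B = -phiM B A ∧
      phiM (matBr A B) C + phiM (matBr B C) A + phiM (matBr C A) B = 0 := by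
  rintro A B C ⟨Na, hA⟩ ⟨Nb, hB⟩ ⟨Nc, hC⟩
  refine ⟨?_, ?_, ?_⟩
  · -- well-definedness
    apply Set.Finite.subset (Finset.Icc (-(Na : ℤ)) Na).finite_toSet
    intro i hi
    simp only [Function.mem_support] at hi
    rw [phiM_diag A B Na Na hA le_rfl i] at hi
    obtain ⟨j, _, hne⟩ := Finset.exists_ne_zero_of_sum_ne_zero hi
    have h : A i j * (ccf k j - ccf k i) ≠ 0 := by
      intro h0; exact hne (by rw [h0, zero_mul])
    exact Finset.mem_coe.mpr (key_mem hA le_rfl h).1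
  · -- skew-symmetry
    set N : ℕ := max Na Nb with hN
    rw [phiM_eq A B Na N hA (le_max_left _ _), phiM_eq B A Nb N hB (le_max_right _ _),
      eq_neg_iff_add_eq_zero]
    have hswap : ∑ i ∈ Finset.Icc (-(N : ℤ)) N, ∑ j ∈ Finset.Icc (-(N : ℤ)) N,
          B i j * (ccf k j - ccf k i) * A j i
        = ∑ i ∈ Finset.Icc (-(N : ℤ)) N, ∑ j ∈ Finset.Icc (-(N : ℤ)) N,
          B j i * (ccf k i - ccf k j) * A i j := by
      rw [Finset.sum_comm]
    rw [hswap, ← Finset.sum_add_distrib]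
    refine Finset.sum_eq_zero fun i _ => ?_
    rw [← Finset.sum_add_distrib]
    refine Finset.sum_eq_zero fun j _ => ?_
    ring
  · -- cocycle
    set R : ℕ := 2 * (Na + Nb + Nc) with hRdef
    set T : Finset ℤ := Finset.Icc (-(R : ℤ)) R with hT
    rw [phi_triple A B C Na Nb hA hB R (by omega),
        phi_triple B C A Nb Nc hB hC R (by omega),
        phi_triple C A B Nc Na hC hA R (by omega)]
    set F : ℤ → ℤ → ℤ → k := fun i j l =>
      (A i l * B l j - B i l * A l j) * (ccf k j - ccf k i) * C j i
      + ((B i l * C l j - C i l * B l j) * (ccf k j - ccf k i) * A j i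
      + (C i l * A l j - A i l * C l j) * (ccf k j - ccf k i) * B j i) with hF
    have hmerge : ∑ i ∈ T, ∑ j ∈ T, ∑ l ∈ T,
          (A i l * B l j - B i l * A l j) * (ccf k j - ccf k i) * C j i
        + ∑ i ∈ T, ∑ j ∈ T, ∑ l ∈ T,
          (B i l * C l j - C i l * B l j) * (ccf k j - ccf k i) * A j i
        + ∑ i ∈ T, ∑ j ∈ T, ∑ l ∈ T,
          (C i l * A l j - A i l * C l j) * (ccf k j - ccf k i) * B j i
        = ∑ i ∈ T, ∑ j ∈ T, ∑ l ∈ T, F i j l := by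
      rw [hF, add_assoc]
      simp only [← Finset.sum_add_distrib]
    rw [hmerge]
    have hc1 : ∑ i ∈ T, ∑ j ∈ T, ∑ l ∈ T, F i j l
        = ∑ i ∈ T, ∑ j ∈ T, ∑ l ∈ T, F l i j := sum3_cyc T F
    have hc2 : ∑ i ∈ T, ∑ j ∈ T, ∑ l ∈ T, F l i j
        = ∑ i ∈ T, ∑ j ∈ T, ∑ l ∈ T, F j l i := sum3_cyc T (fun i j l => F l i j)
    have h3 : (3 : k) * (∑ i ∈ T, ∑ j ∈ T, ∑ l ∈ T, F i j l) = 0 := by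
      have e : (3 : k) * (∑ i ∈ T, ∑ j ∈ T, ∑ l ∈ T, F i j l)
          = (∑ i ∈ T, ∑ j ∈ T, ∑ l ∈ T, F i j l)
            + ((∑ i ∈ T, ∑ j ∈ T, ∑ l ∈ T, F l i j)
            + (∑ i ∈ T, ∑ j ∈ T, ∑ l ∈ T, F j l i)) := by
        rw [← hc2, ← hc1]; ring
      rw [e]
      simp only [← Finset.sum_add_distrib]
      refine Finset.sum_eq_zero fun i _ => ?_
      refine Finset.sum_eq_zero fun j _ => ?_
      refine Finset.sum_eq_zero fun l _ => ?_
      simp only [hF]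
      ring
    have h3ne : (3 : k) ≠ 0 := by norm_num
    exact (mul_eq_zero.mp h3).resolve_left h3ne
end
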